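/- arXiv:1811.07719 — 2 statements merged into one kernel-verified Lean document; each statement's English description precedes it below -/
import Mathlib

section
/- Suppose φ : [k₀, ∞) → ℝ is a non-negative, decreasing function satisfying φ(h) ≤ (M/(h-k))^α · φ(k)^β for all h > k ≥ k₀, where M > 0, α > 0, and β > 1 are constants. Then φ(k₀ + l₀) = 0, where l₀ = 2^(β/(β-1)) · M · φ(k₀)^((β-1)/α). -/
/-!
Along the levels `kₙ = k₀ + l (1 - 2⁻ⁿ)` the hypothesis turns `xₙ = φ kₙ` into a sequence with
`xₙ₊₁ ≤ A Bⁿ xₙ ^ β` for `A = (2M/l) ^ α` and `B = 2 ^ α`. Such a sequence decays geometrically,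
with ratio `B ^ (-1/(β-1))`, as soon as `A x₀ ^ (β-1) ≤ B ^ (-1/(β-1))`; for `l = l₀` this
smallness condition holds with equality. Since `φ` is decreasing, `φ (k₀ + l) ≤ xₙ → 0`.
-/

open Real Filter Topology

theorem le_mul_pow_of_le_mul_pow_mul_rpow {x : ℕ → ℝ} {A B β : ℝ}
    (hx : ∀ n, 0 ≤ x n) (hA : 0 ≤ A) (hB : 0 < B) (hβ : 1 < β)
    (hrec : ∀ n, x (n + 1) ≤ A * B ^ n * x n ^ β)
    (hx₀ : A * x 0 ^ (β - 1) ≤ B ^ (-(β - 1)⁻¹)) (n : ℕ) :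
    x n ≤ x 0 * (B ^ (-(β - 1)⁻¹)) ^ n := by
  set r := B ^ (-(β - 1)⁻¹)
  have hr : 0 < r := by positivity
  -- This is what absorbs the factor `B ^ n` into `(r ^ n) ^ (β - 1)` in the induction step.
  have hBr : B * r ^ (β - 1) = 1 := by
    rw [← rpow_mul hB.le, neg_mul, inv_mul_cancel₀ (by linarith), rpow_neg_one,
      mul_inv_cancel₀ hB.ne']
  have hsplit : ∀ y : ℝ, 0 ≤ y → y ^ β = y * y ^ (β - 1) := fun y hy => by
    conv_lhs => rw [← add_sub_cancel 1 β, rpow_add' hy (by linarith), rpow_one]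
  induction n with
  | zero => simp
  | succ n ih =>
    have hx0 := hx 0
    calc x (n + 1) ≤ A * B ^ n * (x 0 * r ^ n) ^ β := by
          refine (hrec n).trans (mul_le_mul_of_nonneg_left ?_ (by positivity))
          exact rpow_le_rpow (hx n) ih (by linarith)
      _ = A * x 0 ^ (β - 1) * x 0 * r ^ n * (B * r ^ (β - 1)) ^ n := by
          rw [hsplit _ (by positivity), mul_rpow hx0 (by positivity), ← rpow_pow_comm hr.le,
            mul_pow]
          ring
      _ ≤ r * x 0 * r ^ n := by
          rw [hBr, one_pow, mul_one]
          gcongr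
      _ = x 0 * r ^ (n + 1) := by ring

theorem tendsto_zero_of_le_mul_pow_mul_rpow {x : ℕ → ℝ} {A B β : ℝ}
    (hx : ∀ n, 0 ≤ x n) (hA : 0 ≤ A) (hB : 1 < B) (hβ : 1 < β)
    (hrec : ∀ n, x (n + 1) ≤ A * B ^ n * x n ^ β)
    (hx₀ : A * x 0 ^ (β - 1) ≤ B ^ (-(β - 1)⁻¹)) :
    Tendsto x atTop (𝓝 0) := by
  have hr : B ^ (-(β - 1)⁻¹) < 1 :=
    rpow_lt_one_of_one_lt_of_neg hB (neg_neg_of_pos (inv_pos.2 (by linarith)))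
  have hgeom := (tendsto_pow_atTop_nhds_zero_of_lt_one (by positivity) hr).const_mul (x 0)
  rw [mul_zero] at hgeom
  exact squeeze_zero hx
    (le_mul_pow_of_le_mul_pow_mul_rpow hx hA (by linarith) hβ hrec hx₀) hgeom

theorem div_div_two_pow_rpow {M l α : ℝ} (hM : 0 ≤ M) (hl : 0 < l) (n : ℕ) :
    (M / (l / 2 ^ (n + 1))) ^ α = (2 * M / l) ^ α * (2 ^ α) ^ n := by
  have h : M / (l / 2 ^ (n + 1)) = 2 ^ n * (2 * M / l) := by
    field_simp
    ring
  rw [h, mul_rpow (by positivity) (by positivity), ← rpow_pow_comm zero_le_two, mul_comm]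

theorem eq_zero_of_le_div_sub_rpow_mul_rpow {φ : ℝ → ℝ} {k₀ l M α β : ℝ}
    (hl : 0 < l) (hM : 0 ≤ M) (hα : 0 < α) (hβ : 1 < β)
    (hnonneg : ∀ k, k₀ ≤ k → 0 ≤ φ k)
    (hmono : ∀ k h : ℝ, k₀ ≤ k → k ≤ h → φ h ≤ φ k)
    (hrec : ∀ h k : ℝ, k₀ ≤ k → k < h → φ h ≤ (M / (h - k)) ^ α * (φ k) ^ β)
    (hsmall : (2 * M / l) ^ α * φ k₀ ^ (β - 1) ≤ (2 ^ α) ^ (-(β - 1)⁻¹)) :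
    φ (k₀ + l) = 0 := by
  set k : ℕ → ℝ := fun n => k₀ + l - l / 2 ^ n
  have hk₀ : ∀ n, k₀ ≤ k n := fun n => by
    have : l / 2 ^ n ≤ l := div_le_self hl.le (one_le_pow₀ one_le_two)
    simp only [k]
    linarith
  have hk_le : ∀ n, k n ≤ k₀ + l := fun n => by
    have : 0 ≤ l / 2 ^ n := by positivity
    simp only [k]
    linarith
  have hstep : ∀ n, k (n + 1) - k n = l / 2 ^ (n + 1) := fun n => by
    simp only [k]
    field_simp
    ring
  have hlim : Tendsto (fun n => φ (k n)) atTop (𝓝 0) := by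
    refine tendsto_zero_of_le_mul_pow_mul_rpow (A := (2 * M / l) ^ α)
      (fun n => hnonneg _ (hk₀ n)) (by positivity) (one_lt_rpow one_lt_two hα) hβ (fun n => ?_)
      (by simpa [k] using hsmall)
    have hlt : k n < k (n + 1) := by
      have : 0 < l / 2 ^ (n + 1) := by positivity
      linarith [hstep n]
    calc φ (k (n + 1)) ≤ (M / (k (n + 1) - k n)) ^ α * φ (k n) ^ β := hrec _ _ (hk₀ n) hlt
      _ = (2 * M / l) ^ α * (2 ^ α) ^ n * φ (k n) ^ β := by
        rw [hstep, div_div_two_pow_rpow hM hl]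
  exact le_antisymm (ge_of_tendsto' hlim fun n => hmono _ _ (hk₀ n) (hk_le n))
    (hnonneg _ (by linarith))

theorem two_mul_div_rpow_mul_rpow_eq {M α β φ₀ : ℝ} (hM : 0 < M) (hα : 0 < α) (hβ : 1 < β)
    (hφ₀ : 0 < φ₀) :
    (2 * M / (2 ^ (β / (β - 1)) * M * φ₀ ^ ((β - 1) / α))) ^ α * φ₀ ^ (β - 1)
      = (2 ^ α) ^ (-(β - 1)⁻¹) := by
  have hbase : 2 * M / (2 ^ (β / (β - 1)) * M * φ₀ ^ ((β - 1) / α))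
      = 2 ^ (-(β - 1)⁻¹) * φ₀ ^ (-((β - 1) / α)) := by
    have h2 : (2 : ℝ) ^ (β / (β - 1)) = 2 * 2 ^ (β - 1)⁻¹ := by
      rw [← rpow_one_add' zero_le_two (by positivity)]
      have hβ' : β - 1 ≠ 0 := by linarith
      congr 1
      field_simp
      ring
    rw [h2, rpow_neg zero_le_two, rpow_neg hφ₀.le]
    field_simp
  rw [hbase, mul_rpow (by positivity) (by positivity), ← rpow_mul zero_le_two,
    ← rpow_mul hφ₀.le, ← rpow_mul zero_le_two, mul_assoc, ← rpow_add hφ₀, neg_mul, neg_mul,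
    div_mul_cancel₀ _ hα.ne', neg_add_cancel, rpow_zero, mul_one, mul_neg, mul_comm α]

/-- De Giorgi iteration lemma. -/
theorem de_giorgi_iteration (φ : ℝ → ℝ) (k₀ M α β : ℝ)
    (hM : 0 < M) (hα : 0 < α) (hβ : 1 < β)
    (hnonneg : ∀ k, k₀ ≤ k → 0 ≤ φ k)
    (hmono : ∀ k h : ℝ, k₀ ≤ k → k ≤ h → φ h ≤ φ k)
    (hrec : ∀ h k : ℝ, k₀ ≤ k → k < h → φ h ≤ (M / (h - k)) ^ α * (φ k) ^ β) :
    φ (k₀ + 2 ^ (β / (β - 1)) * M * (φ k₀) ^ ((β - 1) / α)) = 0 := by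
  rcases (hnonneg k₀ le_rfl).eq_or_lt with h0 | h0
  · rw [← h0, zero_rpow (div_pos (sub_pos.2 hβ) hα).ne', mul_zero, add_zero]
    exact h0.symm
  · exact eq_zero_of_le_div_sub_rpow_mul_rpow (by positivity) hM.le hα hβ hnonneg hmono hrec
      (two_mul_div_rpow_mul_rpow_eq hM hα hβ h0).le
end

section
/- Let u ∈ C¹([a,b]; ℝ) with a < b and let p ≥ 1. Then (∫_a^b |u(x)|^p dx)^(1/p) ≤ (b-a)^(1/p) · ((2/(b-a)) ∫_a^b u(x)² dx + (b-a) ∫_a^b u'(x)² dx)^(1/2). -/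
/-!
For `x, y ∈ [a, b]` the fundamental theorem of calculus applied to `u²` gives
`u(x)² ≤ u(y)² + ∫ |2 u u'|`; choosing `y` where `u²` is minimal, `u(y)² ≤ (b - a)⁻¹ ∫ u²`,
and the pointwise AM-GM inequality `|2 u u'| ≤ u² / (b - a) + (b - a) u'²` bounds the last
integral. So `sup |u|²` is at most the bracket on the right-hand side, and the `L^p` norm
of `u` is at most `(b - a)^(1/p) sup |u|`.
-/

open Real intervalIntegral MeasureTheory Set
open scoped Interval

theorem sub_le_integral_abs_deriv {f f' : ℝ → ℝ} {a b x y : ℝ}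
    (hf : ∀ t ∈ Icc a b, HasDerivAt f (f' t) t) (hf' : IntervalIntegrable f' volume a b)
    (hx : x ∈ Icc a b) (hy : y ∈ Icc a b) :
    f x - f y ≤ ∫ t in a..b, |f' t| := by
  have hab : a ≤ b := hx.1.trans hx.2
  have hsub : uIcc y x ⊆ Icc a b := uIcc_subset_Icc hy hx
  have hftc : ∫ t in y..x, f' t = f x - f y :=
    integral_eq_sub_of_hasDerivAt (fun t ht => hf t (hsub ht))
      (hf'.mono_set (by rwa [uIcc_of_le hab]))
  calc f x - f y = ∫ t in y..x, f' t := hftc.symm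
    _ ≤ |∫ t in y..x, f' t| := le_abs_self _
    _ ≤ ∫ t in Ι y x, |f' t| := by
        simpa only [Real.norm_eq_abs] using norm_integral_le_integral_norm_uIoc (f := f')
    _ ≤ ∫ t in Ioc a b, |f' t| :=
        setIntegral_mono_set ((intervalIntegrable_iff_integrableOn_Ioc_of_le hab).1 hf'.abs)
          (Filter.Eventually.of_forall fun t => abs_nonneg _)
          (uIoc_of_le hab ▸ (uIoc_subset_uIoc_of_uIcc_subset_uIcc
            (uIcc_of_le hab ▸ hsub)).eventuallyLE)
    _ = ∫ t in a..b, |f' t| := (integral_of_le hab).symm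

theorem le_inv_mul_integral_add_integral_abs_deriv {f f' : ℝ → ℝ} {a b : ℝ} (hab : a < b)
    (hf : ∀ t ∈ Icc a b, HasDerivAt f (f' t) t) (hf' : IntervalIntegrable f' volume a b)
    {x : ℝ} (hx : x ∈ Icc a b) :
    f x ≤ (b - a)⁻¹ * (∫ t in a..b, f t) + ∫ t in a..b, |f' t| := by
  have hcont : ContinuousOn f (Icc a b) := fun t ht => (hf t ht).continuousAt.continuousWithinAt
  obtain ⟨y, hy, hmin⟩ := isCompact_Icc.exists_isMinOn (nonempty_Icc.2 hab.le) hcont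
  have hmean : (b - a) * f y ≤ ∫ t in a..b, f t := by
    simpa using integral_mono_on hab.le (intervalIntegrable_const (μ := volume))
      (hcont.intervalIntegrable_of_Icc hab.le) fun t ht => hmin ht
  have hfy : f y ≤ (b - a)⁻¹ * ∫ t in a..b, f t := by
    rw [inv_mul_eq_div, le_div_iff₀ (sub_pos.2 hab)]; linarith
  linarith [sub_le_integral_abs_deriv hf hf' hx hy]

theorem abs_two_mul_le_div_add_mul {c : ℝ} (hc : 0 < c) (s t : ℝ) :
    |2 * s * t| ≤ s ^ 2 / c + c * t ^ 2 := by
  rw [div_add' _ _ _ hc.ne', le_div_iff₀ hc]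
  rcases abs_cases (2 * s * t) with ⟨h, -⟩ | ⟨h, -⟩ <;> rw [h] <;>
    nlinarith [sq_nonneg (s - c * t), sq_nonneg (s + c * t)]

theorem integral_abs_two_mul_le {f g : ℝ → ℝ} {a b c : ℝ} (hab : a ≤ b) (hc : 0 < c)
    (hf : ContinuousOn f (Icc a b)) (hg : ContinuousOn g (Icc a b)) :
    ∫ t in a..b, |2 * f t * g t| ≤
      (∫ t in a..b, f t ^ 2) / c + c * ∫ t in a..b, g t ^ 2 := by
  have hf2 : IntervalIntegrable (fun t => f t ^ 2) volume a b :=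
    (hf.pow 2).intervalIntegrable_of_Icc hab
  have hg2 : IntervalIntegrable (fun t => g t ^ 2) volume a b :=
    (hg.pow 2).intervalIntegrable_of_Icc hab
  rw [← intervalIntegral.integral_div, ← intervalIntegral.integral_const_mul,
    ← integral_add (hf2.div_const c) (hg2.const_mul c)]
  exact integral_mono_on (μ := volume) hab
    (((continuousOn_const.mul hf).mul hg).abs.intervalIntegrable_of_Icc hab)
    ((hf2.div_const c).add (hg2.const_mul c)) fun t _ => abs_two_mul_le_div_add_mul hc _ _

theorem rpow_integral_abs_rpow_inv_le {f : ℝ → ℝ} {a b C p : ℝ} (hab : a ≤ b) (hp : 0 < p)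
    (hC : 0 ≤ C) (hfC : ∀ x ∈ Icc a b, |f x| ≤ C) :
    (∫ x in a..b, |f x| ^ p) ^ (1 / p) ≤ (b - a) ^ (1 / p) * C := by
  have hint : ∫ x in a..b, |f x| ^ p ≤ C ^ p * (b - a) := by
    refine (le_abs_self _).trans ?_
    rw [← abs_of_nonneg (sub_nonneg.2 hab), ← Real.norm_eq_abs]
    refine intervalIntegral.norm_integral_le_of_norm_le_const fun x hx => ?_
    rw [uIoc_of_le hab] at hx
    rw [Real.norm_eq_abs, abs_of_nonneg (by positivity)]
    exact rpow_le_rpow (abs_nonneg _) (hfC x (Ioc_subset_Icc_self hx)) hp.le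
  calc (∫ x in a..b, |f x| ^ p) ^ (1 / p)
      ≤ (C ^ p * (b - a)) ^ (1 / p) :=
        rpow_le_rpow (integral_nonneg hab fun x _ => by positivity) hint (by positivity)
    _ = (b - a) ^ (1 / p) * C := by
        rw [mul_rpow (by positivity) (sub_nonneg.2 hab), ← rpow_mul hC, mul_one_div_cancel hp.ne',
          rpow_one, mul_comm]

theorem sq_le_two_div_mul_integral_sq_add_mul_integral_deriv_sq {u u' : ℝ → ℝ} {a b : ℝ}
    (hab : a < b) (hu : ∀ x ∈ Icc a b, HasDerivAt u (u' x) x)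
    (hu' : ContinuousOn u' (Icc a b)) {x : ℝ} (hx : x ∈ Icc a b) :
    u x ^ 2 ≤ 2 / (b - a) * (∫ t in a..b, u t ^ 2) + (b - a) * ∫ t in a..b, u' t ^ 2 := by
  have hu_cont : ContinuousOn u (Icc a b) := fun t ht => (hu t ht).continuousAt.continuousWithinAt
  have hsq : ∀ t ∈ Icc a b, HasDerivAt (fun s => u s ^ 2) (2 * u t * u' t) t := fun t ht => by
    simpa using (hu t ht).fun_pow 2
  have hmean := le_inv_mul_integral_add_integral_abs_deriv hab hsq
    (((continuousOn_const.mul hu_cont).mul hu').intervalIntegrable_of_Icc hab.le) hx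
  have hamgm := integral_abs_two_mul_le hab.le (sub_pos.2 hab) hu_cont hu'
  have hsplit : 2 / (b - a) * ∫ t in a..b, u t ^ 2 =
      (b - a)⁻¹ * (∫ t in a..b, u t ^ 2) + (∫ t in a..b, u t ^ 2) / (b - a) := by ring
  linarith

theorem Lp_bound_by_L2_H1 (a b : ℝ) (hab : a < b) (p : ℝ) (hp : 1 ≤ p)
    (u u' : ℝ → ℝ)
    (hderiv : ∀ x ∈ Set.Icc a b, HasDerivAt u (u' x) x)
    (hcont : ContinuousOn u' (Set.Icc a b)) :
    (∫ x in a..b, |u x| ^ p) ^ (1 / p) ≤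
      (b - a) ^ (1 / p) *
        ((2 / (b - a)) * (∫ x in a..b, (u x) ^ 2)
          + (b - a) * (∫ x in a..b, (u' x) ^ 2)) ^ ((1 : ℝ) / 2) := by
  rw [← sqrt_eq_rpow]
  exact rpow_integral_abs_rpow_inv_le hab.le (by linarith) (sqrt_nonneg _) fun x hx =>
    abs_le_sqrt (sq_le_two_div_mul_integral_sq_add_mul_integral_deriv_sq hab hderiv hcont hx)
end
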